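/- arXiv:2106.12182 — 7 statements merged into one kernel-verified Lean document; each statement's English description precedes it below -/
import Mathlib

section
/- Let A and B be disjoint groups, with A partitioned into disjoint subgroups A1 and A2. Suppose a reconstruction algorithm satisfies Representation Demographic Parity with respect to both the partition {A, B} and the partition {A1, A2, B}, i.e. q_{AA} = q_{BB} and q_{A1A1} = q_{A2A2} = q_{BB}, where q_{cc'} = Pr(x̂ ∈ c' | x* ∈ c). Then q_{A1A2} = 0 and q_{A2A1} = 0; that is, there is no confusion between A1 and A2. -/
/-! Write `m(c, c')` for the joint mass `μ (X⁻¹' c ∩ Xhat⁻¹' c')` and `p(c)` for `μ (X⁻¹' c)`.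
A common diagonal rate `q` gives `m(A1, A1) + m(A2, A2) = q (p(A1) + p(A2)) = m(A1 ∪ A2, A1 ∪ A2)`,
while additivity splits the right side into the two diagonal masses plus the cross masses
`m(A1, A2)` and `m(A2, A1)`, which must therefore vanish. -/

open MeasureTheory ProbabilityTheory
open scoped ENNReal

namespace MeasureTheory

variable {Ω : Type*} [MeasurableSpace Ω] {μ : Measure Ω}

theorem measure_union_inter {s₁ s₂ : Set Ω} (hs : Disjoint s₁ s₂) (hs₂ : MeasurableSet s₂)
    (t : Set Ω) : μ ((s₁ ∪ s₂) ∩ t) = μ (s₁ ∩ t) + μ (s₂ ∩ t) := by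
  rw [← measure_inter_add_sdiff _ hs₂, add_comm]
  congr 2 <;> ext ω <;> simp only [Set.mem_inter_iff, Set.mem_union, Set.mem_sdiff] <;>
    have := hs.notMem_of_mem_left (a := ω) <;> tauto

theorem measure_inter_union (s : Set Ω) {t₁ t₂ : Set Ω} (ht : Disjoint t₁ t₂)
    (ht₂ : MeasurableSet t₂) : μ (s ∩ (t₁ ∪ t₂)) = μ (s ∩ t₁) + μ (s ∩ t₂) := by
  simp only [Set.inter_comm s]
  exact measure_union_inter ht ht₂ s

theorem measure_union_inter_union {s₁ s₂ t₁ t₂ : Set Ω} (hs : Disjoint s₁ s₂)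
    (ht : Disjoint t₁ t₂) (hs₂ : MeasurableSet s₂) (ht₂ : MeasurableSet t₂) :
    μ ((s₁ ∪ s₂) ∩ (t₁ ∪ t₂)) =
      μ (s₁ ∩ t₁) + μ (s₁ ∩ t₂) + μ (s₂ ∩ t₁) + μ (s₂ ∩ t₂) := by
  rw [measure_union_inter hs hs₂, measure_inter_union _ ht ht₂, measure_inter_union _ ht ht₂,
    add_assoc (μ (s₁ ∩ t₁) + _)]

end MeasureTheory

namespace ProbabilityTheory

variable {Ω : Type*} [MeasurableSpace Ω] {μ : Measure Ω} [IsFiniteMeasure μ]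

theorem cond_eq_zero_and_cond_eq_zero_of_cond_union_eq {s₁ s₂ t₁ t₂ : Set Ω}
    (hs₁ : MeasurableSet s₁) (hs₂ : MeasurableSet s₂) (ht₂ : MeasurableSet t₂)
    (hs : Disjoint s₁ s₂) (ht : Disjoint t₁ t₂) (h₂ : μ[t₂ | s₂] = μ[t₁ | s₁])
    (hU : μ[t₁ ∪ t₂ | s₁ ∪ s₂] = μ[t₁ | s₁]) :
    μ[t₂ | s₁] = 0 ∧ μ[t₁ | s₂] = 0 := by
  have hdiag : μ ((s₁ ∪ s₂) ∩ (t₁ ∪ t₂)) = μ (s₁ ∩ t₁) + μ (s₂ ∩ t₂) := by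
    rw [← cond_mul_eq_inter (hs₁.union hs₂), hU, measure_union hs hs₂, mul_add,
      cond_mul_eq_inter hs₁, ← h₂, cond_mul_eq_inter hs₂]
  have hcross : μ (s₁ ∩ t₂) + μ (s₂ ∩ t₁) = 0 := by
    refine (ENNReal.add_right_inj (a := μ (s₁ ∩ t₁) + μ (s₂ ∩ t₂)) ?_).1 ?_
    · exact ENNReal.add_ne_top.2 ⟨measure_ne_top _ _, measure_ne_top _ _⟩
    · calc _ = μ (s₁ ∩ t₁) + μ (s₁ ∩ t₂) + μ (s₂ ∩ t₁) + μ (s₂ ∩ t₂) := by ring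
        _ = _ := by rw [← measure_union_inter_union hs ht hs₂ ht₂, hdiag, add_zero]
  obtain ⟨h₁₂, h₂₁⟩ := add_eq_zero.1 hcross
  exact ⟨by rw [cond_apply hs₁, h₁₂, mul_zero], by rw [cond_apply hs₂, h₂₁, mul_zero]⟩

end ProbabilityTheory

theorem rdp_two_partitions_no_confusion_general
    {Ω α : Type*} [MeasurableSpace Ω] [MeasurableSpace α]
    (μ : Measure Ω) [IsProbabilityMeasure μ]
    (X Xhat : Ω → α) (hX : Measurable X) (hXhat : Measurable Xhat)
    (A1 A2 B : Set α)
    (hA1 : MeasurableSet A1) (hA2 : MeasurableSet A2)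
    (hd12 : Disjoint A1 A2)
    (hRDP2 : μ[Xhat ⁻¹' (A1 ∪ A2) | X ⁻¹' (A1 ∪ A2)] = μ[Xhat ⁻¹' B | X ⁻¹' B])
    (hRDP3a : μ[Xhat ⁻¹' A1 | X ⁻¹' A1] = μ[Xhat ⁻¹' B | X ⁻¹' B])
    (hRDP3b : μ[Xhat ⁻¹' A2 | X ⁻¹' A2] = μ[Xhat ⁻¹' B | X ⁻¹' B]) :
    μ[Xhat ⁻¹' A2 | X ⁻¹' A1] = 0 ∧ μ[Xhat ⁻¹' A1 | X ⁻¹' A2] = 0 := by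
  rw [Set.preimage_union, Set.preimage_union] at hRDP2
  exact cond_eq_zero_and_cond_eq_zero_of_cond_union_eq (hX hA1) (hX hA2) (hXhat hA2)
    (hd12.preimage X) (hd12.preimage Xhat) (hRDP3b.trans hRDP3a.symm) (hRDP2.trans hRDP3a.symm)

/-- If a reconstruction algorithm satisfies Representation Demographic Parity with
respect to both the partition `{A, B}` (with `A = A1 ∪ A2`) and the refined partition
`{A1, A2, B}`, and both `A1`, `A2` have positive probability under the ground truth,
then there is no confusion between `A1` and `A2`. -/
theorem rdp_two_partitions_no_confusion
    {Ω α : Type*} [MeasurableSpace Ω] [MeasurableSpace α]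
    (μ : Measure Ω) [IsProbabilityMeasure μ]
    (X Xhat : Ω → α) (hX : Measurable X) (hXhat : Measurable Xhat)
    (A1 A2 B : Set α)
    (hA1 : MeasurableSet A1) (hA2 : MeasurableSet A2) (hB : MeasurableSet B)
    (hd12 : Disjoint A1 A2) (hdAB : Disjoint (A1 ∪ A2) B)
    (h1 : μ (X ⁻¹' A1) ≠ 0) (h2 : μ (X ⁻¹' A2) ≠ 0)
    (hRDP2 : μ[Xhat ⁻¹' (A1 ∪ A2) | X ⁻¹' (A1 ∪ A2)] = μ[Xhat ⁻¹' B | X ⁻¹' B])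
    (hRDP3a : μ[Xhat ⁻¹' A1 | X ⁻¹' A1] = μ[Xhat ⁻¹' B | X ⁻¹' B])
    (hRDP3b : μ[Xhat ⁻¹' A2 | X ⁻¹' A2] = μ[Xhat ⁻¹' B | X ⁻¹' B]) :
    μ[Xhat ⁻¹' A2 | X ⁻¹' A1] = 0 ∧ μ[Xhat ⁻¹' A1 | X ⁻¹' A2] = 0 :=
  rdp_two_partitions_no_confusion_general μ X Xhat hX hXhat A1 A2 B hA1 hA2 hd12 hRDP2 hRDP3a hRDP3b
end

section
/- If there exists a majority class c1 with Pr(x* ∈ c1) > 1/2 > Σ_{i≠1} Pr(x* ∈ c_i), and a reconstruction algorithm satisfies Representation Demographic Parity with common accuracy α = Pr(x̂ ∈ c_i | x* ∈ c_i) < 1 for all i, then the algorithm cannot also satisfy Proportional Representation, i.e. Pr(x̂ ∈ c1) < Pr(x* ∈ c1). -/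
open MeasureTheory ProbabilityTheory
open scoped ENNReal

/-!
By the law of total probability, `Pr(x̂ ∈ c₁)` is the sum over `i` of `Pr(x* ∈ cᵢ, x̂ ∈ c₁)`.
The term `i = 1` equals `a · Pr(x* ∈ c₁)`, and for `i ≠ 1` the event `x̂ ∈ c₁` excludes
`x̂ ∈ cᵢ`, so the term is at most `(1 - a) · Pr(x* ∈ cᵢ)`. Hence `Pr(x̂ ∈ c₁)` is at most a convex
combination of `Pr(x* ∈ c₁)` and the minority mass `∑_{i ≠ 1} Pr(x* ∈ cᵢ) < Pr(x* ∈ c₁)`, with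
weight `1 - a > 0` on the smaller one.
-/

theorem ENNReal.mul_add_one_sub_mul_lt {a x y : ℝ≥0∞} (ha : a < 1) (hy : y ≠ ∞) (hxy : x < y) :
    a * y + (1 - a) * x < y := by
  have hsub : 1 - a ≠ 0 := (tsub_pos_of_lt ha).ne'
  calc a * y + (1 - a) * x
      < a * y + (1 - a) * y := by
        gcongr
        · exact ENNReal.mul_ne_top (ne_top_of_lt ha) hy
        · exact ne_top_of_le_ne_top ENNReal.one_ne_top tsub_le_self
    _ = y := by rw [← add_mul, add_tsub_cancel_of_le ha.le, one_mul]

theorem MeasureTheory.measure_le_sum_inter {Ω ι : Type*} [MeasurableSpace Ω] [Fintype ι]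
    (μ : Measure Ω) {t : ι → Set Ω} (ht : ⋃ i, t i = Set.univ) (v : Set Ω) :
    μ v ≤ ∑ i, μ (t i ∩ v) := by
  calc μ v = μ (⋃ i, t i ∩ v) := by rw [← Set.iUnion_inter, ht, Set.univ_inter]
    _ ≤ ∑ i, μ (t i ∩ v) := measure_iUnion_fintype_le μ _

namespace ProbabilityTheory

variable {Ω : Type*} [MeasurableSpace Ω] {μ : Measure Ω} [IsFiniteMeasure μ] {s u v : Set Ω}
  {a : ℝ≥0∞}

theorem measure_inter_eq_mul_of_cond_eq (hs : MeasurableSet s) (h : μ[u | s] = a) :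
    μ (s ∩ u) = a * μ s := by
  rw [← h, cond_mul_eq_inter hs]

theorem measure_inter_le_one_sub_mul_of_cond_eq (hs : MeasurableSet s) (hu : MeasurableSet u)
    (huv : Disjoint u v) (h : μ[u | s] = a) : μ (s ∩ v) ≤ (1 - a) * μ s := by
  have hcond : μ[v | s] ≤ 1 - a := by
    refine ENNReal.le_sub_of_add_le_right (h ▸ measure_ne_top _ _) ?_
    rw [← h, ← measure_union huv.symm hu]
    exact prob_le_one
  rw [← cond_mul_eq_inter hs]
  gcongr

end ProbabilityTheory

/-- If there is a majority class `c i1` with probability more than `1/2` (and the other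
classes together have probability less than `1/2`), and the algorithm satisfies
Representation Demographic Parity with common accuracy `a < 1`, then Proportional
Representation fails for the majority class: `Pr(x̂ ∈ c i1) < Pr(x* ∈ c i1)`. -/
theorem rdp_majority_violates_pr
    {Ω α : Type*} [MeasurableSpace Ω] [MeasurableSpace α]
    (μ : Measure Ω) [IsProbabilityMeasure μ]
    (X Xhat : Ω → α) (hX : Measurable X) (hXhat : Measurable Xhat)
    {k : ℕ} (c : Fin k → Set α) (hc : ∀ i, MeasurableSet (c i))
    (hdisj : Pairwise (Function.onFun Disjoint c)) (hcover : (⋃ i, c i) = Set.univ)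
    (i1 : Fin k)
    (hmaj : (1 : ℝ≥0∞) / 2 < μ (X ⁻¹' c i1))
    (hmin : ∑ i ∈ Finset.univ.erase i1, μ (X ⁻¹' c i) < (1 : ℝ≥0∞) / 2)
    (a : ℝ≥0∞) (ha : a < 1)
    (hRDP : ∀ i, μ[Xhat ⁻¹' c i | X ⁻¹' c i] = a) :
    μ (Xhat ⁻¹' c i1) < μ (X ⁻¹' c i1) := by
  have hXcover : ⋃ i, X ⁻¹' c i = Set.univ := by
    rw [← Set.preimage_iUnion, hcover, Set.preimage_univ]
  have hminority : ∀ i ∈ Finset.univ.erase i1,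
      μ (X ⁻¹' c i ∩ Xhat ⁻¹' c i1) ≤ (1 - a) * μ (X ⁻¹' c i) := fun i hi =>
    measure_inter_le_one_sub_mul_of_cond_eq (hX (hc i)) (hXhat (hc i))
      ((hdisj (Finset.ne_of_mem_erase hi)).preimage Xhat) (hRDP i)
  calc μ (Xhat ⁻¹' c i1)
      ≤ ∑ i, μ (X ⁻¹' c i ∩ Xhat ⁻¹' c i1) := measure_le_sum_inter μ hXcover _
    _ = μ (X ⁻¹' c i1 ∩ Xhat ⁻¹' c i1)
          + ∑ i ∈ Finset.univ.erase i1, μ (X ⁻¹' c i ∩ Xhat ⁻¹' c i1) :=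
        (Finset.add_sum_erase _ _ (Finset.mem_univ i1)).symm
    _ ≤ a * μ (X ⁻¹' c i1) + (1 - a) * ∑ i ∈ Finset.univ.erase i1, μ (X ⁻¹' c i) := by
        rw [measure_inter_eq_mul_of_cond_eq (hX (hc i1)) (hRDP i1), Finset.mul_sum]
        gcongr with i hi
        exact hminority i hi
    _ < μ (X ⁻¹' c i1) :=
        ENNReal.mul_add_one_sub_mul_lt ha (measure_ne_top μ _) (hmin.trans hmaj)
end

section
/- If a reconstruction algorithm satisfies Conditional Proportional Representation with respect to sets c_i and c_j — i.e. Pr(x̂ ∈ c_i | y) = Pr(x* ∈ c_i | y) and Pr(x̂ ∈ c_j | y) = Pr(x* ∈ c_j | y) almost surely over the measurement y — and x̂ is conditionally independent of x* given y, then the algorithm satisfies Symmetric Pairwise Error: Pr(x̂ ∈ c_i, x* ∈ c_j) = Pr(x̂ ∈ c_j, x* ∈ c_i). -/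
/-!
Conditioning on each value `v` of the measurement, independence factors both confusion
probabilities into products of marginals, and CPR makes the marginals of `x̂` and `x*` agree, so
the two products coincide. Summing over `v` with the law of total probability gives SPE; fibres of
measure zero contribute nothing on either side.
-/

open MeasureTheory ProbabilityTheory

theorem measure_eq_sum_cond_mul_measure_fiber {Ω Y : Type*} [MeasurableSpace Ω] [Fintype Y]
    [MeasurableSpace Y] [MeasurableSingletonClass Y] {Ym : Ω → Y} (hY : Measurable Ym)
    (μ : Measure Ω) [IsFiniteMeasure μ] (A : Set Ω) :
    μ A = ∑ v, μ[A | Ym ⁻¹' {v}] * μ (Ym ⁻¹' {v}) := by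
  conv_lhs => rw [← sum_meas_smul_cond_fiber hY μ]
  simp only [Measure.coe_finsetSum, Measure.coe_smul, Finset.sum_apply, Pi.smul_apply,
    smul_eq_mul, mul_comm]

theorem measure_inter_symm_of_indep_of_measure_eq {Ω : Type*} [MeasurableSpace Ω]
    (ν : Measure Ω) {A A' B B' : Set Ω}
    (hAB' : ν (A ∩ B') = ν A * ν B') (hA'B : ν (A' ∩ B) = ν A' * ν B)
    (hAB : ν A = ν B) (hA'B' : ν A' = ν B') :
    ν (A ∩ B') = ν (A' ∩ B) := by
  rw [hAB', hA'B, hAB, hA'B', mul_comm]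

theorem cpr_implies_spe_general
    {Ω α Y : Type*} [MeasurableSpace Ω] [MeasurableSpace α]
    [Fintype Y] [MeasurableSpace Y] [MeasurableSingletonClass Y]
    (μ : Measure Ω) [IsProbabilityMeasure μ]
    (X Xhat : Ω → α) (Ym : Ω → Y)
    (hY : Measurable Ym)
    (ci cj : Set α) (hci : MeasurableSet ci) (hcj : MeasurableSet cj)
    (hCI : ∀ (v : Y) (U V : Set α), MeasurableSet U → MeasurableSet V →
      μ[Xhat ⁻¹' U ∩ X ⁻¹' V | Ym ⁻¹' {v}]
        = μ[Xhat ⁻¹' U | Ym ⁻¹' {v}] * μ[X ⁻¹' V | Ym ⁻¹' {v}])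
    (hCPRi : ∀ v : Y, μ (Ym ⁻¹' {v}) ≠ 0 →
      μ[Xhat ⁻¹' ci | Ym ⁻¹' {v}] = μ[X ⁻¹' ci | Ym ⁻¹' {v}])
    (hCPRj : ∀ v : Y, μ (Ym ⁻¹' {v}) ≠ 0 →
      μ[Xhat ⁻¹' cj | Ym ⁻¹' {v}] = μ[X ⁻¹' cj | Ym ⁻¹' {v}]) :
    μ (Xhat ⁻¹' ci ∩ X ⁻¹' cj) = μ (Xhat ⁻¹' cj ∩ X ⁻¹' ci) := by
  rw [measure_eq_sum_cond_mul_measure_fiber hY, measure_eq_sum_cond_mul_measure_fiber hY]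
  refine Finset.sum_congr rfl fun v _ => ?_
  rcases eq_or_ne (μ (Ym ⁻¹' {v})) 0 with hv | hv
  · rw [hv, mul_zero, mul_zero]
  · rw [measure_inter_symm_of_indep_of_measure_eq _ (hCI v ci cj hci hcj)
      (hCI v cj ci hcj hci) (hCPRi v hv) (hCPRj v hv)]

/-- CPR implies SPE: if the reconstruction satisfies Conditional Proportional
Representation with respect to the sets `ci` and `cj`, and `x̂` is conditionally
independent of `x*` given the measurement `y`, then the algorithm satisfies
Symmetric Pairwise Error for this pair of sets. -/
theorem cpr_implies_spe
    {Ω α Y : Type*} [MeasurableSpace Ω] [MeasurableSpace α]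
    [Fintype Y] [MeasurableSpace Y] [MeasurableSingletonClass Y]
    (μ : Measure Ω) [IsProbabilityMeasure μ]
    (X Xhat : Ω → α) (Ym : Ω → Y)
    (hX : Measurable X) (hXhat : Measurable Xhat) (hY : Measurable Ym)
    (ci cj : Set α) (hci : MeasurableSet ci) (hcj : MeasurableSet cj)
    (hCI : ∀ (v : Y) (U V : Set α), MeasurableSet U → MeasurableSet V →
      μ[Xhat ⁻¹' U ∩ X ⁻¹' V | Ym ⁻¹' {v}]
        = μ[Xhat ⁻¹' U | Ym ⁻¹' {v}] * μ[X ⁻¹' V | Ym ⁻¹' {v}])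
    (hCPRi : ∀ v : Y, μ (Ym ⁻¹' {v}) ≠ 0 →
      μ[Xhat ⁻¹' ci | Ym ⁻¹' {v}] = μ[X ⁻¹' ci | Ym ⁻¹' {v}])
    (hCPRj : ∀ v : Y, μ (Ym ⁻¹' {v}) ≠ 0 →
      μ[Xhat ⁻¹' cj | Ym ⁻¹' {v}] = μ[X ⁻¹' cj | Ym ⁻¹' {v}]) :
    μ (Xhat ⁻¹' ci ∩ X ⁻¹' cj) = μ (Xhat ⁻¹' cj ∩ X ⁻¹' ci) :=
  cpr_implies_spe_general μ X Xhat Ym hY ci cj hci hcj hCI hCPRi hCPRj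
end

section
/- With a finite measurable partition {c1,...,ck}, an algorithm minimizes the Representation Cross-Entropy RCE(A) = −E_{x*,y} log Pr(x̂ ∈ U(x*) | y) over all reconstruction algorithms if and only if it satisfies Conditional Proportional Representation on the partition: Q(c_i | y) = P(c_i | y) for all i, almost surely over y. -/
/-!
The cross-entropy `-∑ᵢ P i log R i` of an admissible `R` exceeds the entropy of `P` by the
Kullback–Leibler divergence, which is nonnegative and vanishes only at `R = P` (Gibbs). Hence
`P(·|y)` itself minimizes the RCE, and `Q` attains that minimum exactly when `Q(·|y) = P(·|y)`
wherever `y` has positive probability.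
-/

open Finset Real

/-- The pointwise form of Gibbs' inequality, from `log x < x - 1` at `x = q / p`. -/
theorem mul_log_lt_mul_log_add_sub {p q : ℝ} (hp : 0 ≤ p) (hq : 0 ≤ q) (hpq : 0 < p → 0 < q)
    (hne : q ≠ p) : p * log q < p * log p + (q - p) := by
  rcases hp.eq_or_lt with rfl | hp
  · simpa using lt_of_le_of_ne hq hne.symm
  have hq := hpq hp
  have hlog : log q - log p < q / p - 1 := by
    rw [← log_div hq.ne' hp.ne']
    exact log_lt_sub_one_of_pos (div_pos hq hp) (by rwa [ne_eq, div_eq_one_iff_eq hp.ne'])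
  calc p * log q = p * log p + p * (log q - log p) := by ring
    _ < p * log p + p * (q / p - 1) := by gcongr
    _ = p * log p + (q - p) := by field_simp

theorem mul_log_le_mul_log_add_sub {p q : ℝ} (hp : 0 ≤ p) (hq : 0 ≤ q)
    (hpq : 0 < p → 0 < q) : p * log q ≤ p * log p + (q - p) := by
  rcases eq_or_ne q p with rfl | hne
  · simp
  · exact (mul_log_lt_mul_log_add_sub hp hq hpq hne).le

section Gibbs

variable {ι : Type*} {s : Finset ι} {p q : ι → ℝ}

theorem sum_mul_log_le_sum_mul_log (hp : ∀ i ∈ s, 0 ≤ p i) (hq : ∀ i ∈ s, 0 ≤ q i)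
    (hpq : ∀ i ∈ s, 0 < p i → 0 < q i) (hsum : ∑ i ∈ s, q i ≤ ∑ i ∈ s, p i) :
    ∑ i ∈ s, p i * log (q i) ≤ ∑ i ∈ s, p i * log (p i) :=
  calc ∑ i ∈ s, p i * log (q i) ≤ ∑ i ∈ s, (p i * log (p i) + (q i - p i)) :=
        sum_le_sum fun i hi => mul_log_le_mul_log_add_sub (hp i hi) (hq i hi) (hpq i hi)
    _ = ∑ i ∈ s, p i * log (p i) + (∑ i ∈ s, q i - ∑ i ∈ s, p i) := by
        rw [sum_add_distrib, sum_sub_distrib]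
    _ ≤ ∑ i ∈ s, p i * log (p i) := by linarith

theorem sum_mul_log_lt_sum_mul_log (hp : ∀ i ∈ s, 0 ≤ p i) (hq : ∀ i ∈ s, 0 ≤ q i)
    (hpq : ∀ i ∈ s, 0 < p i → 0 < q i) (hsum : ∑ i ∈ s, q i ≤ ∑ i ∈ s, p i)
    (hne : ∃ i ∈ s, q i ≠ p i) :
    ∑ i ∈ s, p i * log (q i) < ∑ i ∈ s, p i * log (p i) := by
  obtain ⟨j, hj, hqj⟩ := hne
  calc ∑ i ∈ s, p i * log (q i) < ∑ i ∈ s, (p i * log (p i) + (q i - p i)) :=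
        sum_lt_sum (fun i hi => mul_log_le_mul_log_add_sub (hp i hi) (hq i hi) (hpq i hi))
          ⟨j, hj, mul_log_lt_mul_log_add_sub (hp j hj) (hq j hj) (hpq j hj) hqj⟩
    _ = ∑ i ∈ s, p i * log (p i) + (∑ i ∈ s, q i - ∑ i ∈ s, p i) := by
        rw [sum_add_distrib, sum_sub_distrib]
    _ ≤ ∑ i ∈ s, p i * log (p i) := by linarith

end Gibbs

theorem rce_minimizer_iff_cpr_general
    {k : ℕ} {Y : Type*} [Fintype Y]
    (py : Y → ℝ) (hpy : ∀ v, 0 ≤ py v)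
    (P : Fin k → Y → ℝ)
    (hPnn : ∀ i v, 0 ≤ P i v) (hPsum : ∀ v, ∑ i, P i v = 1)
    (Q : Fin k → Y → ℝ)
    (hQnn : ∀ i v, 0 ≤ Q i v) (hQsum : ∀ v, ∑ i, Q i v = 1)
    (hQpos : ∀ i v, 0 < P i v → 0 < Q i v)
    (RCE : (Fin k → Y → ℝ) → ℝ)
    (hRCE : ∀ R, RCE R = -∑ v, py v * ∑ i, P i v * Real.log (R i v)) :
    (∀ R : Fin k → Y → ℝ, (∀ i v, 0 ≤ R i v) → (∀ v, ∑ i, R i v = 1) →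
        (∀ i v, 0 < P i v → 0 < R i v) → RCE Q ≤ RCE R)
      ↔ (∀ v, 0 < py v → ∀ i, Q i v = P i v) := by
  have gibbs : ∀ R : Fin k → Y → ℝ, (∀ i v, 0 ≤ R i v) → (∀ v, ∑ i, R i v = 1) →
      (∀ i v, 0 < P i v → 0 < R i v) →
      ∀ v, ∑ i, P i v * log (R i v) ≤ ∑ i, P i v * log (P i v) :=
    fun R hR hRsum hRpos v => sum_mul_log_le_sum_mul_log (fun i _ => hPnn i v)
      (fun i _ => hR i v) (fun i _ => hRpos i v) ((hRsum v).trans (hPsum v).symm).le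
  constructor
  · intro hmin
    by_contra! ⟨v, hv, i, hi⟩
    have hlt : ∑ i, P i v * log (Q i v) < ∑ i, P i v * log (P i v) :=
      sum_mul_log_lt_sum_mul_log (fun i _ => hPnn i v) (fun i _ => hQnn i v)
        (fun i _ => hQpos i v) ((hQsum v).trans (hPsum v).symm).le ⟨i, mem_univ i, hi⟩
    have hPQ : RCE P < RCE Q := by
      rw [hRCE, hRCE, neg_lt_neg_iff]
      exact sum_lt_sum
        (fun w _ => mul_le_mul_of_nonneg_left (gibbs Q hQnn hQsum hQpos w) (hpy w))
        ⟨v, mem_univ v, mul_lt_mul_of_pos_left hlt hv⟩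
    exact (hmin P hPnn hPsum fun _ _ h => h).not_gt hPQ
  · intro hcpr R hR hRsum hRpos
    rw [hRCE, hRCE, neg_le_neg_iff]
    refine sum_le_sum fun v _ => ?_
    rcases (hpy v).eq_or_lt with hv | hv
    · simp [← hv]
    · simp only [hcpr v hv]
      exact mul_le_mul_of_nonneg_left (gibbs R hR hRsum hRpos v) hv.le

/-- An algorithm (with conditional output law `Q(·|y)`) minimizes the Representation
Cross-Entropy over all reconstruction algorithms if and only if it satisfies
Conditional Proportional Representation on the partition, i.e. `Q(c_i|y) = P(c_i|y)`
for all `i`, for every measurement value `y` of positive probability. -/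
theorem rce_minimizer_iff_cpr
    {k : ℕ} {Y : Type*} [Fintype Y]
    (py : Y → ℝ) (hpy : ∀ v, 0 ≤ py v) (hpysum : ∑ v, py v = 1)
    (P : Fin k → Y → ℝ)
    (hPnn : ∀ i v, 0 ≤ P i v) (hPsum : ∀ v, ∑ i, P i v = 1)
    (Q : Fin k → Y → ℝ)
    (hQnn : ∀ i v, 0 ≤ Q i v) (hQsum : ∀ v, ∑ i, Q i v = 1)
    (hQpos : ∀ i v, 0 < P i v → 0 < Q i v)
    (RCE : (Fin k → Y → ℝ) → ℝ)
    (hRCE : ∀ R, RCE R = -∑ v, py v * ∑ i, P i v * Real.log (R i v)) :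
    (∀ R : Fin k → Y → ℝ, (∀ i v, 0 ≤ R i v) → (∀ v, ∑ i, R i v = 1) →
        (∀ i v, 0 < P i v → 0 < R i v) → RCE Q ≤ RCE R)
      ↔ (∀ v, 0 < py v → ∀ i, Q i v = P i v) :=
  rce_minimizer_iff_cpr_general py hpy P hPnn hPsum Q hQnn hQsum hQpos RCE hRCE
end

section
/- For discrete distributions over a finite set of classes [k], define for weights λ ∈ Δ_{k-1} (the probability simplex with positive entries) the reweighted accuracies α_i(λ) = E_{y | x*∈c_i}[ λ_i P(x*∈c_i|y) / Σ_j λ_j P(x*∈c_j|y) ]. If λ* minimizes f(λ) = max_i α_i(λ) / min_j α_j(λ) over the compact set T = {λ : Σλ_i = 1, α_i(λ) ≥ ε ∀i} (where ε = min_i α_i at uniform weights), and f(λ*) = r > 1, then multiplying λ*_i by r^{1/4} for all i in S = {i : α_i(λ*) ≤ √r · min_j α_j(λ*)} (and renormalizing) yields λ' ∈ T with f(λ') < r. Consequently, min over T of f equals 1, i.e. there exist positive weights λ with Σλ_i = 1 such that all α_i(λ) are equal — posterior sampling on the λ-reweighted distribution satisfies Representation Demographic Parity. -/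
/-!
Reweighting acts on the accuracies only through the normalizer `∑ j, λ j * P j y`. Multiplying
the weights of a set `S` of classes by `ρ ≥ 1` multiplies this normalizer by a factor in
`[1, ρ]`, so the accuracy of a class in `S` gets multiplied by a factor in `[1, ρ]` and that of a
class outside `S` by a factor in `[ρ⁻¹, 1)`. Take `r = ρ ^ 4` to be the current max/min ratio and
`S` the classes with accuracy at most `ρ ^ 2` times the minimum `m`. Then the minimum does not
drop, the classes in `S` end up below `ρ ^ 3 * m`, and the others end up strictly below the old
maximum `r * m`, so the ratio falls below `r`.

Weights whose accuracies all stay above a fixed `ε > 0` form a compact set, since a vanishing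
weight kills its class's accuracy. The continuous ratio attains its minimum there, and by the
step above that minimum is `1`.
-/

open Finset

section Piecewise

variable {ι : Type*} {s : Set ι} [∀ j, Decidable (j ∈ s)] {lam : ι → ℝ} {ρ : ℝ}

lemma le_piecewise_smul (hρ : 1 ≤ ρ) (hlam : 0 ≤ lam) : lam ≤ s.piecewise (ρ • lam) lam := by
  intro i
  by_cases hi : i ∈ s
  · simpa [hi] using le_mul_of_one_le_left (hlam i) hρ
  · simp [hi]

lemma piecewise_smul_le_smul (hρ : 1 ≤ ρ) (hlam : 0 ≤ lam) :
    s.piecewise (ρ • lam) lam ≤ ρ • lam := by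
  intro i
  by_cases hi : i ∈ s
  · simp [hi]
  · simpa [hi] using le_mul_of_one_le_left (hlam i) hρ

lemma lt_piecewise_smul (hρ : 1 < ρ) (hlam : ∀ j, 0 < lam j) {i : ι} (hi : i ∈ s) :
    lam < s.piecewise (ρ • lam) lam :=
  Pi.lt_def.2 ⟨le_piecewise_smul hρ.le fun j => (hlam j).le, i,
    by simpa [hi] using lt_mul_of_one_lt_left (hlam i) hρ⟩

end Piecewise

lemma le_inf'_and_sup'_lt_mul_inf' {ι : Type*} [Fintype ι] [Nonempty ι] {a b : ι → ℝ}
    {m ρ : ℝ} (hm : 0 < m) (hρ : 1 < ρ) (hma : ∀ i, m ≤ a i) (haM : ∀ i, a i ≤ ρ ^ 4 * m)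
    (hlow : ∀ i, a i ≤ ρ ^ 2 * m → a i ≤ b i ∧ b i ≤ ρ * a i)
    (hhigh : ∀ i, ¬ a i ≤ ρ ^ 2 * m → a i ≤ ρ * b i ∧ b i < a i) :
    m ≤ univ.inf' univ_nonempty b ∧
      univ.sup' univ_nonempty b < ρ ^ 4 * univ.inf' univ_nonempty b := by
  have hmb : m ≤ univ.inf' univ_nonempty b := by
    refine le_inf' _ _ fun i _ => ?_
    by_cases hi : a i ≤ ρ ^ 2 * m
    · exact (hma i).trans (hlow i hi).1
    · have h : ρ * (ρ * m) < ρ * b i := by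
        rw [← mul_assoc, ← sq]
        exact (not_le.1 hi).trans_le (hhigh i hi).1
      have hρm : ρ * m < b i := lt_of_mul_lt_mul_left h (by linarith)
      linarith [le_mul_of_one_le_left hm.le hρ.le]
  refine ⟨hmb, (sup'_lt_iff _).2 fun i _ => ?_⟩
  have hρm : ρ ^ 4 * m ≤ ρ ^ 4 * univ.inf' univ_nonempty b := by gcongr
  by_cases hi : a i ≤ ρ ^ 2 * m
  · calc b i ≤ ρ * a i := (hlow i hi).2
      _ ≤ ρ * (ρ ^ 2 * m) := by gcongr
      _ < ρ ^ 4 * m := by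
        have : ρ ^ 3 < ρ ^ 4 := pow_lt_pow_right₀ hρ (by norm_num)
        nlinarith
      _ ≤ _ := hρm
  · exact ((hhigh i hi).2.trans_le (haM i)).trans_le hρm

section Reweighting

variable {ι Y : Type*} [Fintype ι]

noncomputable def reweightedNormalizer (P : ι → Y → ℝ) (lam : ι → ℝ) (v : Y) : ℝ :=
  ∑ j, lam j * P j v

variable {P : ι → Y → ℝ} {lam g : ι → ℝ}

lemma reweightedNormalizer_pos (hP : ∀ i v, 0 < P i v) (hlam : 0 ≤ lam) {i : ι}
    (hi : 0 < lam i) (v : Y) : 0 < reweightedNormalizer P lam v :=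
  sum_pos' (fun j _ => mul_nonneg (hlam j) (hP j v).le) ⟨i, mem_univ i, mul_pos hi (hP i v)⟩

lemma reweightedNormalizer_smul (c : ℝ) (lam : ι → ℝ) (v : Y) :
    reweightedNormalizer P (c • lam) v = c * reweightedNormalizer P lam v := by
  simp only [reweightedNormalizer, mul_sum, Pi.smul_apply, smul_eq_mul, mul_assoc]

lemma reweightedNormalizer_mono (hP : ∀ i v, 0 ≤ P i v) (h : lam ≤ g) (v : Y) :
    reweightedNormalizer P lam v ≤ reweightedNormalizer P g v :=
  sum_le_sum fun j _ => mul_le_mul_of_nonneg_right (h j) (hP j v)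

lemma reweightedNormalizer_strictMono (hP : ∀ i v, 0 < P i v) (h : lam < g) (v : Y) :
    reweightedNormalizer P lam v < reweightedNormalizer P g v := by
  obtain ⟨hle, i, hi⟩ := Pi.lt_def.1 h
  exact sum_lt_sum (fun j _ => mul_le_mul_of_nonneg_right (hle j) (hP j v).le)
    ⟨i, mem_univ i, mul_lt_mul_of_pos_right hi (hP i v)⟩

lemma reweightedNormalizer_piecewise_smul_le {ρ : ℝ} {s : Set ι} [∀ j, Decidable (j ∈ s)]
    (hP : ∀ i v, 0 ≤ P i v) (hρ : 1 ≤ ρ) (hlam : 0 ≤ lam) (v : Y) :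
    reweightedNormalizer P (s.piecewise (ρ • lam) lam) v ≤ ρ * reweightedNormalizer P lam v :=
  (reweightedNormalizer_mono hP (piecewise_smul_le_smul hρ hlam) v).trans_eq
    (reweightedNormalizer_smul ρ lam v)

variable [Fintype Y]

/-- The accuracy `α_i(λ)` of class `i`: `L i` is the law of the observation given class `i` and
`P j y` the posterior probability of class `j` given `y`. -/
noncomputable def reweightedAcc (L P : ι → Y → ℝ) (lam : ι → ℝ) (i : ι) : ℝ :=
  ∑ v, L i v * (lam i * P i v / reweightedNormalizer P lam v)

variable {L : ι → Y → ℝ}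

lemma reweightedAcc_smul {c : ℝ} (hc : c ≠ 0) (lam : ι → ℝ) :
    reweightedAcc L P (c • lam) = reweightedAcc L P lam := by
  ext i
  simp only [reweightedAcc, reweightedNormalizer_smul, Pi.smul_apply, smul_eq_mul, mul_assoc,
    mul_div_mul_left _ _ hc]

lemma reweightedAcc_div_sum (hg : ∑ j, g j ≠ 0) :
    reweightedAcc L P (fun i => g i / ∑ j, g j) = reweightedAcc L P g := by
  have : (fun i => g i / ∑ j, g j) = (∑ j, g j)⁻¹ • g := by
    ext i; simp [div_eq_inv_mul]
  rw [this, reweightedAcc_smul (inv_ne_zero hg)]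

lemma reweightedAcc_pos [Nonempty Y] (hL : ∀ i v, 0 < L i v) (hP : ∀ i v, 0 < P i v)
    (hlam : 0 ≤ lam) {i : ι} (hi : 0 < lam i) : 0 < reweightedAcc L P lam i :=
  sum_pos (fun v _ => mul_pos (hL i v) (div_pos (mul_pos hi (hP i v))
    (reweightedNormalizer_pos hP hlam hi v))) univ_nonempty

lemma reweightedAcc_le_mul_mul (hL : ∀ i v, 0 ≤ L i v) (hP : ∀ i v, 0 < P i v)
    (hlam : ∀ j, 0 < lam j) (hg : ∀ j, 0 < g j) {i : ι} {a b : ℝ}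
    (hgi : g i ≤ a * lam i)
    (hD : ∀ v, reweightedNormalizer P lam v ≤ b * reweightedNormalizer P g v) :
    reweightedAcc L P g i ≤ a * b * reweightedAcc L P lam i := by
  rw [reweightedAcc, reweightedAcc, mul_sum]
  refine sum_le_sum fun v _ => ?_
  have hDlam := reweightedNormalizer_pos hP (fun j => (hlam j).le) (hlam i) v
  have hDg := reweightedNormalizer_pos hP (fun j => (hg j).le) (hg i) v
  have hcross :
      g i * reweightedNormalizer P lam v ≤ a * lam i * (b * reweightedNormalizer P g v) :=
    mul_le_mul hgi (hD v) hDlam.le ((hg i).le.trans hgi)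
  calc L i v * (g i * P i v / reweightedNormalizer P g v)
      = L i v * P i v * (g i / reweightedNormalizer P g v) := by ring
    _ ≤ L i v * P i v * (a * lam i * b / reweightedNormalizer P lam v) := by
      refine mul_le_mul_of_nonneg_left ?_ (mul_nonneg (hL i v) (hP i v).le)
      rw [div_le_div_iff₀ hDg hDlam]
      linarith
    _ = a * b * (L i v * (lam i * P i v / reweightedNormalizer P lam v)) := by ring

lemma reweightedAcc_lt (hL : ∀ i v, 0 < L i v) (hP : ∀ i v, 0 < P i v) [Nonempty Y]
    (hlam : ∀ j, 0 < lam j) {i : ι} (hgi : g i ≤ lam i)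
    (hD : ∀ v, reweightedNormalizer P lam v < reweightedNormalizer P g v) :
    reweightedAcc L P g i < reweightedAcc L P lam i := by
  refine sum_lt_sum_of_nonempty univ_nonempty fun v _ => mul_lt_mul_of_pos_left ?_ (hL i v)
  exact div_lt_div₀' (mul_le_mul_of_nonneg_right hgi (hP i v).le) (hD v)
    (mul_pos (hlam i) (hP i v)) (reweightedNormalizer_pos hP (fun j => (hlam j).le) (hlam i) v)

section Piecewise

variable {ρ : ℝ} {s : Set ι} [∀ j, Decidable (j ∈ s)]

lemma reweightedAcc_piecewise_smul_of_mem (hL : ∀ i v, 0 ≤ L i v) (hP : ∀ i v, 0 < P i v)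
    (hρ : 1 ≤ ρ) (hlam : ∀ j, 0 < lam j) {i : ι} (hi : i ∈ s) :
    reweightedAcc L P lam i ≤ reweightedAcc L P (s.piecewise (ρ • lam) lam) i ∧
      reweightedAcc L P (s.piecewise (ρ • lam) lam) i ≤ ρ * reweightedAcc L P lam i := by
  have hlam₀ : 0 ≤ lam := fun j => (hlam j).le
  have hle := le_piecewise_smul (s := s) hρ hlam₀
  have hg j : 0 < s.piecewise (ρ • lam) lam j := (hlam j).trans_le (hle j)
  have hgi : s.piecewise (ρ • lam) lam i = ρ * lam i := Set.piecewise_eq_of_mem _ _ _ hi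
  have hρ₀ : ρ ≠ 0 := (zero_lt_one.trans_le hρ).ne'
  constructor
  · simpa [inv_mul_cancel₀ hρ₀] using reweightedAcc_le_mul_mul hL hP hg hlam
      (a := ρ⁻¹) (by rw [hgi, inv_mul_cancel_left₀ hρ₀])
      (reweightedNormalizer_piecewise_smul_le (fun i v => (hP i v).le) hρ hlam₀)
  · simpa using reweightedAcc_le_mul_mul hL hP hlam hg (b := 1) hgi.le
      (by simpa using reweightedNormalizer_mono (fun i v => (hP i v).le) hle)

lemma reweightedAcc_piecewise_smul_of_notMem (hL : ∀ i v, 0 < L i v) (hP : ∀ i v, 0 < P i v)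
    [Nonempty Y] (hρ : 1 < ρ) (hlam : ∀ j, 0 < lam j) (hs : s.Nonempty) {i : ι} (hi : i ∉ s) :
    reweightedAcc L P lam i ≤ ρ * reweightedAcc L P (s.piecewise (ρ • lam) lam) i ∧
      reweightedAcc L P (s.piecewise (ρ • lam) lam) i < reweightedAcc L P lam i := by
  have hlam₀ : 0 ≤ lam := fun j => (hlam j).le
  have hg j : 0 < s.piecewise (ρ • lam) lam j :=
    (hlam j).trans_le (le_piecewise_smul hρ.le hlam₀ j)
  have hgi : s.piecewise (ρ • lam) lam i = lam i := Set.piecewise_eq_of_notMem _ _ _ hi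
  obtain ⟨j, hj⟩ := hs
  constructor
  · simpa using reweightedAcc_le_mul_mul (fun i v => (hL i v).le) hP hg hlam (a := 1)
      (by rw [hgi, one_mul])
      (reweightedNormalizer_piecewise_smul_le (fun i v => (hP i v).le) hρ.le hlam₀)
  · exact reweightedAcc_lt hL hP hlam hgi.le
      (reweightedNormalizer_strictMono hP (lt_piecewise_smul hρ hlam hj))

end Piecewise

variable [Nonempty ι]

noncomputable def reweightedAccRatio (L P : ι → Y → ℝ) (lam : ι → ℝ) : ℝ :=
  univ.sup' univ_nonempty (reweightedAcc L P lam) /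
    univ.inf' univ_nonempty (reweightedAcc L P lam)

noncomputable def rebalancedWeights (L P : ι → Y → ℝ) (lam : ι → ℝ) : ι → ℝ :=
  let r := reweightedAccRatio L P lam
  {i | reweightedAcc L P lam i ≤ √r * univ.inf' univ_nonempty (reweightedAcc L P lam)}.piecewise
    (r ^ (1 / 4 : ℝ) • lam) lam

theorem le_inf'_and_reweightedAccRatio_rebalancedWeights_lt [Nonempty Y]
    (hL : ∀ i v, 0 < L i v) (hP : ∀ i v, 0 < P i v) (hlam : ∀ i, 0 < lam i)
    (hr : 1 < reweightedAccRatio L P lam) :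
    univ.inf' univ_nonempty (reweightedAcc L P lam)
        ≤ univ.inf' univ_nonempty (reweightedAcc L P (rebalancedWeights L P lam)) ∧
      reweightedAccRatio L P (rebalancedWeights L P lam) < reweightedAccRatio L P lam := by
  set r := reweightedAccRatio L P lam with hr_def
  set m := univ.inf' univ_nonempty (reweightedAcc L P lam) with hm_def
  set ρ := r ^ (1 / 4 : ℝ)
  have hm : 0 < m :=
    (lt_inf'_iff _).2 fun i _ => reweightedAcc_pos hL hP (fun j => (hlam j).le) (hlam i)
  have hρ : 1 < ρ := Real.one_lt_rpow hr (by norm_num)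
  have hρ4 : ρ ^ 4 = r := by
    rw [← Real.rpow_natCast, ← Real.rpow_mul (by linarith)]; norm_num
  have hρ2 : √r = ρ ^ 2 := by
    rw [← hρ4, show ρ ^ 4 = (ρ ^ 2) ^ 2 by ring, Real.sqrt_sq (by positivity)]
  have hsup : univ.sup' univ_nonempty (reweightedAcc L P lam) = r * m := by
    rw [hr_def, reweightedAccRatio, div_mul_cancel₀ _ hm.ne']
  set s := {i | reweightedAcc L P lam i ≤ ρ ^ 2 * m}
  have hg : rebalancedWeights L P lam = s.piecewise (ρ • lam) lam := by
    rw [rebalancedWeights, ← hr_def, ← hm_def, hρ2]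
  obtain ⟨i₀, -, hi₀⟩ := exists_mem_eq_inf' univ_nonempty (reweightedAcc L P lam)
  have hi₀s : i₀ ∈ s := by
    show reweightedAcc L P lam i₀ ≤ ρ ^ 2 * m
    rw [← hi₀]
    exact le_mul_of_one_le_left hm.le (one_le_pow₀ hρ.le)
  rw [hg, ← hρ4]
  obtain ⟨hmin, hlt⟩ := le_inf'_and_sup'_lt_mul_inf' hm hρ (fun i => inf'_le _ (mem_univ i))
    (fun i => hρ4 ▸ hsup ▸ le_sup' _ (mem_univ i))
    (fun i hi => reweightedAcc_piecewise_smul_of_mem (fun i v => (hL i v).le) hP hρ.le hlam hi)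
    (fun i hi => reweightedAcc_piecewise_smul_of_notMem hL hP hρ hlam ⟨i₀, hi₀s⟩ hi)
  exact ⟨hmin, (div_lt_iff₀ (hm.trans_le hmin)).2 hlt⟩

end Reweighting

section Feasible

variable {ι Y : Type*} [Fintype ι] [Fintype Y] {L P : ι → Y → ℝ}

variable (L P) in
def reweightedFeasible (eps : ℝ) : Set (ι → ℝ) :=
  {lam | (∀ i, 0 < lam i) ∧ (∑ i, lam i = 1) ∧ ∀ i, eps ≤ reweightedAcc L P lam i}

lemma reweightedFeasible_subset_stdSimplex {eps : ℝ} :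
    reweightedFeasible L P eps ⊆ stdSimplex ℝ ι :=
  fun _ hlam => ⟨fun i => (hlam.1 i).le, hlam.2.1⟩

lemma continuousOn_reweightedAcc (hP : ∀ i v, 0 < P i v) :
    ContinuousOn (reweightedAcc L P) (stdSimplex ℝ ι) := by
  refine continuousOn_pi.2 fun i => continuousOn_finsetSum _ fun v _ =>
    continuousOn_const.mul (ContinuousOn.div (by fun_prop)
      (by unfold reweightedNormalizer; fun_prop) fun lam hlam => ?_)
  obtain ⟨j, -, hj⟩ := exists_lt_of_sum_lt (by simp [hlam.2] : ∑ _j : ι, (0 : ℝ) < ∑ j, lam j)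
  exact (reweightedNormalizer_pos hP hlam.1 hj v).ne'

lemma reweightedFeasible_eq {eps : ℝ} (heps : 0 < eps) :
    reweightedFeasible L P eps =
      stdSimplex ℝ ι ∩ reweightedAcc L P ⁻¹' Set.Ici fun _ => eps := by
  ext lam
  refine ⟨fun ⟨hpos, hsum, hacc⟩ => ⟨⟨fun i => (hpos i).le, hsum⟩, hacc⟩,
    fun ⟨⟨hnn, hsum⟩, hacc⟩ => ⟨fun i => (hnn i).lt_of_ne' fun h0 => ?_, hsum, hacc⟩⟩
  have : reweightedAcc L P lam i = 0 := by simp [reweightedAcc, h0]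
  exact heps.not_ge (this ▸ hacc i)

lemma isCompact_reweightedFeasible (hP : ∀ i v, 0 < P i v) {eps : ℝ} (heps : 0 < eps) :
    IsCompact (reweightedFeasible L P eps) := by
  rw [reweightedFeasible_eq heps]
  exact (isCompact_stdSimplex ℝ ι).of_isClosed_subset
    ((continuousOn_reweightedAcc hP).preimage_isClosed_of_isClosed (isClosed_stdSimplex ℝ ι)
      isClosed_Ici) Set.inter_subset_left

variable [Nonempty ι]

lemma continuousOn_reweightedAccRatio (hP : ∀ i v, 0 < P i v) {eps : ℝ} (heps : 0 < eps) :
    ContinuousOn (reweightedAccRatio L P) (reweightedFeasible L P eps) := by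
  have hacc : ContinuousOn (reweightedAcc L P) (reweightedFeasible L P eps) :=
    (continuousOn_reweightedAcc hP).mono reweightedFeasible_subset_stdSimplex
  have hcoord i :
      ContinuousOn (fun lam => reweightedAcc L P lam i) (reweightedFeasible L P eps) :=
    (continuous_apply i).comp_continuousOn hacc
  refine (ContinuousOn.finset_sup'_apply _ fun i _ => hcoord i).div
    (ContinuousOn.finset_inf'_apply _ fun i _ => hcoord i) fun lam hlam => ?_
  exact (heps.trans_le (le_inf' _ _ fun i _ => hlam.2.2 i)).ne'

theorem div_sum_rebalancedWeights_mem_and_ratio_lt [Nonempty Y] (hL : ∀ i v, 0 < L i v)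
    (hP : ∀ i v, 0 < P i v) {eps : ℝ} {lam : ι → ℝ} (hlam : lam ∈ reweightedFeasible L P eps)
    (hr : 1 < reweightedAccRatio L P lam) :
    (fun i => rebalancedWeights L P lam i / ∑ j, rebalancedWeights L P lam j)
        ∈ reweightedFeasible L P eps ∧
      reweightedAccRatio L P
        (fun i => rebalancedWeights L P lam i / ∑ j, rebalancedWeights L P lam j)
        < reweightedAccRatio L P lam := by
  obtain ⟨hpos, -, heps⟩ := hlam
  obtain ⟨hmin, hlt⟩ := le_inf'_and_reweightedAccRatio_rebalancedWeights_lt hL hP hpos hr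
  have hg j : 0 < rebalancedWeights L P lam j :=
    (hpos j).trans_le (le_piecewise_smul (Real.one_lt_rpow hr (by norm_num)).le
      (fun j => (hpos j).le) j)
  have hsum : 0 < ∑ j, rebalancedWeights L P lam j := sum_pos (fun j _ => hg j) univ_nonempty
  simp only [reweightedFeasible, Set.mem_ofPred_eq, reweightedAccRatio,
    reweightedAcc_div_sum hsum.ne']
  refine ⟨⟨fun i => div_pos (hg i) hsum, by rw [← sum_div, div_self hsum.ne'], fun i => ?_⟩,
    hlt⟩
  exact (le_inf' _ _ fun j _ => heps j).trans (hmin.trans (inf'_le _ (mem_univ i)))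

theorem exists_reweightedAcc_eq [Nonempty Y] (hL : ∀ i v, 0 < L i v) (hP : ∀ i v, 0 < P i v) :
    ∃ lam : ι → ℝ, (∀ i, 0 < lam i) ∧ (∑ i, lam i = 1) ∧
      ∀ i j, reweightedAcc L P lam i = reweightedAcc L P lam j := by
  set u : ι → ℝ := fun _ => (Fintype.card ι : ℝ)⁻¹
  have hu i : 0 < u i := by positivity
  set eps := univ.inf' univ_nonempty (reweightedAcc L P u)
  have heps : 0 < eps :=
    (lt_inf'_iff _).2 fun i _ => reweightedAcc_pos hL hP (fun j => (hu j).le) (hu i)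
  have huT : u ∈ reweightedFeasible L P eps :=
    ⟨hu, by simp [u], fun i => inf'_le _ (mem_univ i)⟩
  obtain ⟨lam, hlam, hmin⟩ := (isCompact_reweightedFeasible hP heps).exists_isMinOn ⟨u, huT⟩
    (continuousOn_reweightedAccRatio hP heps)
  have hle : reweightedAccRatio L P lam ≤ 1 := not_lt.1 fun hr =>
    have ⟨hmem, hlt⟩ := div_sum_rebalancedWeights_mem_and_ratio_lt hL hP hlam hr
    hlt.not_ge (hmin hmem)
  have hm : 0 < univ.inf' univ_nonempty (reweightedAcc L P lam) :=
    heps.trans_le (le_inf' _ _ fun i _ => hlam.2.2 i)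
  have hsup := (div_le_one hm).1 hle
  exact ⟨lam, hlam.1, hlam.2.1, fun i j => le_antisymm
    ((le_sup' _ (mem_univ i)).trans (hsup.trans (inf'_le _ (mem_univ j))))
    ((le_sup' _ (mem_univ j)).trans (hsup.trans (inf'_le _ (mem_univ i))))⟩

end Feasible

theorem reweighted_posterior_sampling_rdp_general
    {k : ℕ} (hk : 0 < k) {Y : Type*} [Fintype Y]
    (L : Fin k → Y → ℝ) (pri : Fin k → ℝ)
    (hL : ∀ i v, 0 < L i v) (hLsum : ∀ i, ∑ v, L i v = 1)
    (hpri : ∀ i, 0 < pri i)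
    (Post : Fin k → Y → ℝ)
    (hPost : ∀ i v, Post i v = pri i * L i v / ∑ j, pri j * L j v)
    (acc : (Fin k → ℝ) → Fin k → ℝ)
    (hacc : ∀ lam i, acc lam i
      = ∑ v, L i v * (lam i * Post i v / ∑ j, lam j * Post j v))
    (eps : ℝ)
    (T : Set (Fin k → ℝ))
    (hT : T = {lam | (∀ i, 0 < lam i) ∧ (∑ i, lam i = 1) ∧ ∀ i, eps ≤ acc lam i})
    (f : (Fin k → ℝ) → ℝ)
    (hf : ∀ lam, f lam
      = Finset.univ.sup' ⟨⟨0, hk⟩, Finset.mem_univ _⟩ (acc lam)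
        / Finset.univ.inf' ⟨⟨0, hk⟩, Finset.mem_univ _⟩ (acc lam)) :
    (∀ lamstar ∈ T, (∀ lam ∈ T, f lamstar ≤ f lam) → 1 < f lamstar →
      ∀ g : Fin k → ℝ,
        g = (fun i => if acc lamstar i ≤ Real.sqrt (f lamstar) *
              Finset.univ.inf' ⟨⟨0, hk⟩, Finset.mem_univ _⟩ (acc lamstar)
            then f lamstar ^ ((1 : ℝ) / 4) * lamstar i else lamstar i) →
        (fun i => g i / ∑ j, g j) ∈ T ∧ f (fun i => g i / ∑ j, g j) < f lamstar)
    ∧ ∃ lam : Fin k → ℝ, (∀ i, 0 < lam i) ∧ (∑ i, lam i = 1) ∧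
        ∀ i j, acc lam i = acc lam j := by
  have : Nonempty (Fin k) := ⟨⟨0, hk⟩⟩
  have : Nonempty Y := univ_nonempty_iff.1 <| nonempty_of_sum_ne_zero <|
    (hLsum ⟨0, hk⟩).trans_ne one_ne_zero
  have hPost_pos i v : 0 < Post i v := by
    rw [hPost]
    exact div_pos (mul_pos (hpri i) (hL i v))
      (sum_pos (fun j _ => mul_pos (hpri j) (hL j v)) univ_nonempty)
  obtain rfl : acc = reweightedAcc L Post := funext fun lam => funext (hacc lam)
  obtain rfl : f = reweightedAccRatio L Post := funext hf
  obtain rfl : T = reweightedFeasible L Post eps := hT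
  refine ⟨fun lam hlam _ hr g hg => ?_, exists_reweightedAcc_eq hL hPost_pos⟩
  obtain rfl : g = rebalancedWeights L Post lam := hg
  exact div_sum_rebalancedWeights_mem_and_ratio_lt hL hPost_pos hlam hr

/-- Reweighting achieves RDP. With reweighted accuracies
`α_i(λ) = E_{y|x*∈c_i}[λ_i P(c_i|y) / Σ_j λ_j P(c_j|y)]`, if `λ*` minimizes
`f(λ) = max_i α_i(λ) / min_j α_j(λ)` over `T = {λ : Σλ = 1, α_i(λ) ≥ ε}` with
`f(λ*) = r > 1`, then scaling `λ*_i` by `r^{1/4}` on `S = {i : α_i(λ*) ≤ √r·min_j α_j(λ*)}`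
and renormalizing gives `λ' ∈ T` with `f(λ') < r`. Consequently there exist positive
weights `λ` summing to `1` for which all the `α_i(λ)` are equal: posterior sampling on
the `λ`-reweighted distribution satisfies Representation Demographic Parity. -/
theorem reweighted_posterior_sampling_rdp
    {k : ℕ} (hk : 0 < k) {Y : Type*} [Fintype Y]
    (L : Fin k → Y → ℝ) (pri : Fin k → ℝ)
    (hL : ∀ i v, 0 < L i v) (hLsum : ∀ i, ∑ v, L i v = 1)
    (hpri : ∀ i, 0 < pri i) (hprisum : ∑ i, pri i = 1)
    (Post : Fin k → Y → ℝ)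
    (hPost : ∀ i v, Post i v = pri i * L i v / ∑ j, pri j * L j v)
    (acc : (Fin k → ℝ) → Fin k → ℝ)
    (hacc : ∀ lam i, acc lam i
      = ∑ v, L i v * (lam i * Post i v / ∑ j, lam j * Post j v))
    (eps : ℝ)
    (heps : eps = Finset.univ.inf' ⟨⟨0, hk⟩, Finset.mem_univ _⟩
      (acc fun _ => (1 : ℝ) / k))
    (T : Set (Fin k → ℝ))
    (hT : T = {lam | (∀ i, 0 < lam i) ∧ (∑ i, lam i = 1) ∧ ∀ i, eps ≤ acc lam i})
    (f : (Fin k → ℝ) → ℝ)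
    (hf : ∀ lam, f lam
      = Finset.univ.sup' ⟨⟨0, hk⟩, Finset.mem_univ _⟩ (acc lam)
        / Finset.univ.inf' ⟨⟨0, hk⟩, Finset.mem_univ _⟩ (acc lam)) :
    (∀ lamstar ∈ T, (∀ lam ∈ T, f lamstar ≤ f lam) → 1 < f lamstar →
      ∀ g : Fin k → ℝ,
        g = (fun i => if acc lamstar i ≤ Real.sqrt (f lamstar) *
              Finset.univ.inf' ⟨⟨0, hk⟩, Finset.mem_univ _⟩ (acc lamstar)
            then f lamstar ^ ((1 : ℝ) / 4) * lamstar i else lamstar i) →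
        (fun i => g i / ∑ j, g j) ∈ T ∧ f (fun i => g i / ∑ j, g j) < f lamstar)
    ∧ ∃ lam : Fin k → ℝ, (∀ i, 0 < lam i) ∧ (∑ i, lam i = 1) ∧
        ∀ i j, acc lam i = acc lam j :=
  reweighted_posterior_sampling_rdp_general hk L pri hL hLsum hpri Post hPost acc hacc eps T hT f hf
end

section
/- Let {c1,...,ck} be a partition with a majority class c1 such that Pr(x* ∈ c1) > 1/2, and suppose an algorithm satisfies Symmetric Pairwise Error for all pairs and the measurements cannot perfectly distinguish c1 (so the common RDP accuracy, if RDP held, would be strictly less than 1). Then the algorithm cannot satisfy Representation Demographic Parity. -/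
/-!
Symmetric pairwise error applied to a class `c` and its complement says that the mass pushed
out of `c` equals the mass pushed into it, so `Pr(x̂ ∈ c) = Pr(x* ∈ c)`. On the other hand, if
every class is recovered with the same accuracy `α < 1`, the estimate can land in the majority
class `c₁`, with `p = Pr(x* ∈ c₁) > 1/2`, only when `x* ∈ c₁` (probability `α p`) or when it
misclassifies some `x* ∉ c₁` (probability at most `(1 - α)(1 - p)`). Since `1 - p < p`, this
is strictly less than `p`.
-/

open MeasureTheory ProbabilityTheory Set Function
open scoped ENNReal

theorem ENNReal.mul_add_one_sub_mul_lt_s17 {a p q : ℝ≥0∞} (ha : a < 1) (hqp : q < p) (hp : p ≠ ∞) :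
    a * p + (1 - a) * q < p := by
  have ha_ne_top : a ≠ ∞ := (ha.trans ENNReal.one_lt_top).ne
  have hgap : (1 - a) * q < (1 - a) * p :=
    ENNReal.mul_lt_mul_right (tsub_pos_of_lt ha).ne'
      (tsub_le_self.trans_lt ENNReal.one_lt_top).ne hqp
  calc a * p + (1 - a) * q < a * p + (1 - a) * p :=
        ENNReal.add_lt_add_left (ENNReal.mul_ne_top ha_ne_top hp) hgap
    _ = p := by rw [← add_mul, add_tsub_cancel_of_le ha.le, one_mul]

namespace MeasureTheory

variable {Ω ι : Type*} [MeasurableSpace Ω] {μ : Measure Ω}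

theorem measure_eq_of_measure_inter_compl_eq {s t : Set Ω} (hs : MeasurableSet s)
    (ht : MeasurableSet t) (h : μ (s ∩ tᶜ) = μ (sᶜ ∩ t)) : μ s = μ t := by
  rw [← measure_inter_add_sdiff s ht, ← measure_inter_add_sdiff t hs, sdiff_eq, sdiff_eq, h,
    inter_comm s t, inter_comm t sᶜ]

theorem measure_compl_lt_of_half_lt [IsProbabilityMeasure μ] {s : Set Ω} (hs : MeasurableSet s)
    (h : 1 / 2 < μ s) : μ sᶜ < μ s := by
  rw [prob_compl_eq_one_sub hs]
  refine (ENNReal.sub_lt_of_lt_add prob_le_one ?_).trans h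
  calc (1 : ℝ≥0∞) = 1 / 2 + 1 / 2 := (ENNReal.add_halves 1).symm
    _ < 1 / 2 + μ s := ENNReal.add_lt_add_left (by norm_num) h

theorem measure_sdiff_eq_one_sub_cond_mul [IsFiniteMeasure μ] {s t : Set Ω}
    (hs : MeasurableSet s) (ht : MeasurableSet t) : μ (t \ s) = (1 - μ[s | t]) * μ t := by
  rw [ENNReal.sub_mul fun _ _ ↦ measure_ne_top μ t, one_mul, cond_mul_eq_inter ht]
  exact ENNReal.eq_sub_of_add_eq (measure_ne_top μ _) (measure_sdiff_add_inter t hs)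

theorem measure_eq_sum_inter [Fintype ι] {F : ι → Set Ω} (hF : ∀ i, MeasurableSet (F i))
    (hFd : Pairwise (Disjoint on F)) (hFU : ⋃ i, F i = univ) {A : Set Ω}
    (hA : MeasurableSet A) : μ A = ∑ i, μ (A ∩ F i) := by
  conv_lhs => rw [← inter_univ A, ← hFU, inter_iUnion]
  rw [measure_iUnion (fun i j hij ↦ (hFd hij).mono inter_subset_right inter_subset_right)
    fun i ↦ hA.inter (hF i), tsum_fintype]

theorem measure_le_cond_mul_add_one_sub_mul_compl [IsFiniteMeasure μ] [Fintype ι]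
    {E F : ι → Set Ω} (hE : ∀ i, MeasurableSet (E i)) (hEd : Pairwise (Disjoint on E))
    (hF : ∀ i, MeasurableSet (F i)) (hFd : Pairwise (Disjoint on F)) (hFU : ⋃ i, F i = univ)
    {a : ℝ≥0∞} (hcond : ∀ j, μ[E j | F j] = a) (i : ι) :
    μ (E i) ≤ a * μ (F i) + (1 - a) * μ (F i)ᶜ := by
  have hhit : μ (E i ∩ F i) = a * μ (F i) := by
    rw [inter_comm, ← cond_mul_eq_inter (hF i), hcond]
  have hmiss_piece : ∀ j, μ (E i \ F i ∩ F j) ≤ (1 - a) * μ ((F i)ᶜ ∩ F j) := by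
    intro j
    rcases eq_or_ne j i with rfl | hji
    · simp
    · have hsub : E i \ F i ∩ F j ⊆ F j \ E j := fun ω hω ↦
        ⟨hω.2, fun hωj ↦ (hEd hji).le_bot ⟨hωj, hω.1.1⟩⟩
      rw [inter_eq_right.mpr ((hFd hji).symm.subset_compl_left), ← hcond j,
        ← measure_sdiff_eq_one_sub_cond_mul (hE j) (hF j)]
      exact measure_mono hsub
  have hmiss : μ (E i \ F i) ≤ (1 - a) * μ (F i)ᶜ := by
    rw [measure_eq_sum_inter hF hFd hFU ((hE i).diff (hF i)),
      measure_eq_sum_inter hF hFd hFU (hF i).compl, Finset.mul_sum]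
    exact Finset.sum_le_sum fun j _ ↦ hmiss_piece j
  rw [← measure_inter_add_sdiff (E i) (hF i), hhit]
  exact add_le_add_right hmiss _

end MeasureTheory

/-- SPE and RDP are incompatible in the presence of a majority class: if the partition
has a majority class `c i1` with `Pr(x* ∈ c i1) > 1/2`, the algorithm satisfies
Symmetric Pairwise Error for all pairs of sets, and the measurements cannot perfectly
distinguish the majority class (its conditional accuracy is strictly less than `1`),
then Representation Demographic Parity cannot hold. -/
theorem spe_majority_incompatible_rdp
    {Ω α : Type*} [MeasurableSpace Ω] [MeasurableSpace α]
    (μ : Measure Ω) [IsProbabilityMeasure μ]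
    (X Xhat : Ω → α) (hX : Measurable X) (hXhat : Measurable Xhat)
    {k : ℕ} (c : Fin k → Set α) (hc : ∀ i, MeasurableSet (c i))
    (hdisj : Pairwise (Function.onFun Disjoint c)) (hcover : (⋃ i, c i) = Set.univ)
    (i1 : Fin k) (hmaj : (1 : ℝ≥0∞) / 2 < μ (X ⁻¹' c i1))
    (hSPE : ∀ U V : Set α, MeasurableSet U → MeasurableSet V →
      μ (Xhat ⁻¹' U ∩ X ⁻¹' V) = μ (Xhat ⁻¹' V ∩ X ⁻¹' U))
    (himperfect : μ[Xhat ⁻¹' c i1 | X ⁻¹' c i1] < 1) :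
    ¬ (∀ i j, μ[Xhat ⁻¹' c i | X ⁻¹' c i] = μ[Xhat ⁻¹' c j | X ⁻¹' c j]) := by
  intro hRDP
  have hPR : μ (Xhat ⁻¹' c i1) = μ (X ⁻¹' c i1) := by
    refine measure_eq_of_measure_inter_compl_eq (hXhat (hc i1)) (hX (hc i1)) ?_
    simpa only [preimage_compl] using hSPE _ _ (hc i1) (hc i1).compl
  have hbound := measure_le_cond_mul_add_one_sub_mul_compl (fun i ↦ hXhat (hc i))
    (fun i j hij ↦ (hdisj hij).preimage Xhat) (fun i ↦ hX (hc i))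
    (fun i j hij ↦ (hdisj hij).preimage X)
    (by rw [← preimage_iUnion, hcover, preimage_univ]) (fun j ↦ hRDP j i1) i1
  have hminority := measure_compl_lt_of_half_lt (hX (hc i1)) hmaj
  exact (hbound.trans_lt (ENNReal.mul_add_one_sub_mul_lt_s17 himperfect hminority
    (measure_ne_top μ _))).ne hPR
end

section
/- In the two-class case {c1, c2}, posterior sampling under the reweighted distribution with λ1 = λ2 = 1/2, i.e. with reweighted posterior P_λ(c_i | y) = P(y | c_i) / (P(y | c1) + P(y | c2)), satisfies Representation Demographic Parity: E_{y | x* ∈ c1}[P_λ(c1 | y)] = E_{y | x* ∈ c2}[P_λ(c2 | y)] for a finite measurement space. -/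
open scoped BigOperators

/-! Per measurement `y` the two summands differ by
`(L1² - L2²) / (L1 + L2) = L1 - L2`, so the accuracies differ by `∑ L1 - ∑ L2 = 0`. -/

section

variable {K : Type*} [Field K] [LinearOrder K] [IsStrictOrderedRing K]

/-- Nonnegativity handles `a + b = 0`, where division by zero would otherwise break the
identity. -/
lemma mul_div_add_sub_mul_div_add {a b : K} (ha : 0 ≤ a) (hb : 0 ≤ b) :
    a * (a / (a + b)) - b * (b / (a + b)) = a - b := by
  rcases (add_nonneg ha hb).eq_or_lt with hab | hab
  · obtain ⟨rfl, rfl⟩ := (add_eq_zero_iff_of_nonneg ha hb).mp hab.symm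
    simp
  · field_simp
    ring

lemma Finset.sum_mul_div_add_eq_of_sum_eq {ι : Type*} (s : Finset ι) {f g : ι → K}
    (hf : ∀ i ∈ s, 0 ≤ f i) (hg : ∀ i ∈ s, 0 ≤ g i) (hfg : ∑ i ∈ s, f i = ∑ i ∈ s, g i) :
    ∑ i ∈ s, f i * (f i / (f i + g i)) = ∑ i ∈ s, g i * (g i / (f i + g i)) := by
  rw [← sub_eq_zero, ← Finset.sum_sub_distrib,
    Finset.sum_congr rfl fun i hi => mul_div_add_sub_mul_div_add (hf i hi) (hg i hi),
    Finset.sum_sub_distrib, hfg, sub_self]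

end

/-- In the two-class case, posterior sampling under the reweighted distribution with
`λ1 = λ2 = 1/2`, whose reweighted posterior is `P_λ(c_i | y) = P(y|c_i)/(P(y|c1)+P(y|c2))`,
satisfies Representation Demographic Parity: the two per-class accuracies
`E_{y | x* ∈ c_i}[P_λ(c_i | y)]` coincide, for a finite measurement space. -/
theorem two_class_reweighted_rdp
    {Y : Type*} [Fintype Y]
    (L1 L2 : Y → ℝ)
    (hL1 : ∀ y, 0 ≤ L1 y) (hL2 : ∀ y, 0 ≤ L2 y)
    (hL1sum : ∑ y, L1 y = 1) (hL2sum : ∑ y, L2 y = 1)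
    (Plam1 Plam2 : Y → ℝ)
    (hPlam1 : ∀ y, Plam1 y = L1 y / (L1 y + L2 y))
    (hPlam2 : ∀ y, Plam2 y = L2 y / (L1 y + L2 y)) :
    ∑ y, L1 y * Plam1 y = ∑ y, L2 y * Plam2 y := by
  simp_rw [hPlam1, hPlam2]
  exact Finset.univ.sum_mul_div_add_eq_of_sum_eq (fun y _ => hL1 y) (fun y _ => hL2 y)
    (hL1sum.trans hL2sum.symm)
end
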